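/- Let V be a discrete valuation ring with uniformizer π and fraction field F, let N be a finite-dimensional F-vector space equipped with a direct sum decomposition N = ⊕_{i∈I} N_i over a finite index set I, and let L be a finitely generated V-submodule of N. Let v ∈ L with components v_i ∈ N_i, and let (s_i)_{i∈I} be integers such that Σ_{i∈I} π^{n·s_i}·v_i ∈ L for every natural number n. Then v_i = 0 for every index i with s_i < 0. -/

import Mathlib

/-!
Project onto `N_i` and apply a linear form that does not vanish on `v_i`: the image of `L` is a
finitely generated `V`-submodule of `F` containing `π^{-nm} x` for all `n`, where `m = -s_i > 0`
and `x ≠ 0` is the value of the form at `v_i`. Such a submodule has a common denominator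
`a ≠ 0`, so `a x` is an element of `V` divisible by every power of `π`, which forces `a x = 0`.
-/

section Lattice

variable {V K : Type*} [CommRing V] [IsDomain V] [WfDvdMonoid V] [Field K] [Algebra V K]
  [IsFractionRing V K]

theorem eq_zero_of_forall_zpow_mul_mem {M : Submodule V K} (hM : M.FG) {π : V} (hπ0 : π ≠ 0)
    (hπ : ¬IsUnit π) {t : ℤ} (ht : t < 0) {x : K}
    (hx : ∀ n : ℕ, algebraMap V K π ^ ((n : ℤ) * t) * x ∈ M) : x = 0 := by
  obtain ⟨a, ha, hint⟩ := FractionalIdeal.isFractional_of_fg (S := nonZeroDivisors V) hM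
  obtain ⟨m, rfl⟩ := Int.eq_negSucc_of_lt_zero ht
  obtain ⟨z, hz⟩ := hint _ (by simpa using hx 0)
  set π' := algebraMap V K π
  have hπ'0 : π' ≠ 0 := (map_ne_zero_iff _ (IsFractionRing.injective V K)).mpr hπ0
  have hdvd : ∀ n, π ^ n ∣ z := fun n => by
    obtain ⟨r, hr⟩ := hint _ (hx n)
    refine (pow_dvd_pow π (Nat.le_mul_of_pos_right n m.succ_pos)).trans
      ⟨r, IsFractionRing.injective V K ?_⟩
    have hinv : π' ^ ((n : ℤ) * .negSucc m) = (π' ^ (n * m.succ))⁻¹ := by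
      rw [← zpow_natCast, ← zpow_neg, Int.negSucc_eq]
      push_cast
      ring_nf
    rw [map_mul, map_pow, hr, hz, hinv, mul_smul_comm, ← mul_assoc,
      mul_inv_cancel₀ (pow_ne_zero _ hπ'0), one_mul]
  have hz0 : z = 0 := by
    by_contra hz0
    exact FiniteMultiplicity.not_iff_forall.mpr hdvd (.of_not_isUnit hπ hz0)
  rw [hz0, map_zero, eq_comm, smul_eq_zero] at hz
  exact hz.resolve_left (nonZeroDivisors.ne_zero ha)

theorem eq_zero_of_forall_zpow_smul_mem {N : Type*} [AddCommGroup N] [Module K N] [Module V N]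
    [IsScalarTower V K N] {L : Submodule V N} (hL : L.FG) {π : V} (hπ0 : π ≠ 0)
    (hπ : ¬IsUnit π) {t : ℤ} (ht : t < 0) {x : N}
    (hx : ∀ n : ℕ, algebraMap V K π ^ ((n : ℤ) * t) • x ∈ L) : x = 0 := by
  by_contra hx0
  obtain ⟨φ, hφ⟩ := Module.Projective.exists_dual_ne_zero K hx0
  refine hφ <| eq_zero_of_forall_zpow_mul_mem (hL.map (φ.restrictScalars V)) hπ0 hπ ht
    fun n => ?_
  simpa using Submodule.mem_map_of_mem (f := φ.restrictScalars V) (hx n)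

end Lattice

theorem DirectSum.IsInternal.exists_projection {R M ι : Type*} [Semiring R] [AddCommMonoid M]
    [Module R M] [DecidableEq ι] {A : ι → Submodule R M} (h : IsInternal A) (i : ι) :
    ∃ p : M →ₗ[R] M, ∀ j, ∀ x ∈ A j, p x = if j = i then x else 0 := by
  refine ⟨(A i).subtype ∘ₗ component R ι _ i ∘ₗ
    (LinearEquiv.ofBijective (coeLinearMap A) h).symm.toLinearMap, fun j x hx => ?_⟩
  split_ifs with hji
  · subst hji
    simp [← apply_eq_component, h.ofBijective_coeLinearMap_of_mem hx]
  · simp [← apply_eq_component, h.ofBijective_coeLinearMap_of_mem_ne hji hx]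

theorem component_zero_of_neg_exponent
    (V : Type*) [CommRing V] [IsDomain V] [IsDiscreteValuationRing V]
    (π : V) (hπ : Irreducible π)
    (N : Type*) [AddCommGroup N] [Module (FractionRing V) N]
    [Module V N] [IsScalarTower V (FractionRing V) N]
    (I : Type*) [Fintype I] [DecidableEq I]
    (Ni : I → Submodule (FractionRing V) N)
    (hNi : DirectSum.IsInternal Ni)
    (L : Submodule V N) (hL : L.FG)
    (c : I → N) (hc : ∀ i, c i ∈ Ni i)
    (s : I → ℤ)
    (hs : ∀ n : ℕ,
      (∑ i, (algebraMap V (FractionRing V) π) ^ ((n : ℤ) * s i) • c i) ∈ L) :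
    ∀ i, s i < 0 → c i = 0 := by
  intro i hsi
  obtain ⟨p, hp⟩ := hNi.exists_projection i
  refine eq_zero_of_forall_zpow_smul_mem (K := FractionRing V) (hL.map (p.restrictScalars V))
    hπ.ne_zero hπ.not_isUnit hsi fun n => ?_
  have hproj : p (∑ j, algebraMap V (FractionRing V) π ^ ((n : ℤ) * s j) • c j) =
      algebraMap V (FractionRing V) π ^ ((n : ℤ) * s i) • c i := by
    rw [map_sum, Finset.sum_eq_single i (fun j _ hji => by simp [hp j _ (hc j), hji]) (by simp),
      map_smul, hp i _ (hc i), if_pos rfl]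
  rw [← hproj]
  exact Submodule.mem_map_of_mem (f := p.restrictScalars V) (hs n)
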